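/- arXiv:1211.6026 — 2 statements merged into one kernel-verified Lean document; each statement's English description precedes it below -/
import Mathlib

section
/- The map φ : S → S, φ(f) := ((f,Δ),Δ), is symmetric with respect to the inner product ⟨·,·⟩, i.e., ⟨φ(f),g⟩ = ⟨f,φ(g)⟩ for all f,g ∈ S. -/
open MvPolynomial Matrix
open scoped Classical

noncomputable section

/-- `S n` is the polynomial ring `ℝ[x₁,…,xₙ]`, the symmetric algebra of `V*`. -/
abbrev S (n : ℕ) := MvPolynomial (Fin n) ℝ

/-- `apDiff f g = f(∂)g`: the constant coefficient differential operator `f(∂₁,…,∂ₙ)`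
applied to `g`. -/
noncomputable def apDiff {n : ℕ} (f g : S n) : S n :=
  ∑ a ∈ f.support, ∑ b ∈ g.support,
    if a ≤ b then
      (MvPolynomial.coeff a f * MvPolynomial.coeff b g *
        ∏ i, ((b i).descFactorial (a i) : ℝ)) • MvPolynomial.monomial (b - a) (1 : ℝ)
    else 0

/-- The inner product `⟨f,g⟩ = f(∂)g(x)|_{x=0}`. -/
noncomputable def ip {n : ℕ} (f g : S n) : ℝ :=
  MvPolynomial.eval (fun _ => (0 : ℝ)) (apDiff f g)

/-- The action of a matrix `M` on polynomials: for orthogonal `M` this is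
`(M · f)(x) = f(M⁻¹ x)` (substitution `xᵢ ↦ Σⱼ M j i xⱼ`). -/
noncomputable def mAct {n : ℕ} (M : Matrix (Fin n) (Fin n) ℝ) (f : S n) : S n :=
  MvPolynomial.aeval (fun i => ∑ j, MvPolynomial.C (M j i) * MvPolynomial.X j) f

/-- `M` is a reflection: a nontrivial involution whose fixed space is a hyperplane. -/
def IsReflMat {n : ℕ} (M : Matrix (Fin n) (Fin n) ℝ) : Prop :=
  M ≠ 1 ∧ M * M = 1 ∧
    Module.finrank ℝ (LinearMap.ker (Matrix.toLin' (M - 1))) = n - 1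

/-- A finite reflection group `W ⊆ O(n)` together with the data of its
reflections `Refl` and the linear forms `L M` cutting out the reflecting hyperplanes
(one for each reflection, i.e. one for each positive root). -/
structure ReflSetup (n : ℕ) where
  W : Subgroup (Matrix.orthogonalGroup (Fin n) ℝ)
  finW : (W : Set (Matrix.orthogonalGroup (Fin n) ℝ)).Finite
  genRefl : Subgroup.closure
      {w : Matrix.orthogonalGroup (Fin n) ℝ | w ∈ W ∧ IsReflMat (w : Matrix (Fin n) (Fin n) ℝ)} = W
  Refl : Finset (Matrix (Fin n) (Fin n) ℝ)
  mem_Refl : ∀ M, M ∈ Refl ↔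
      ((∃ w ∈ W, (w : Matrix (Fin n) (Fin n) ℝ) = M) ∧ IsReflMat M)
  L : Matrix (Fin n) (Fin n) ℝ → S n
  L_hom : ∀ M ∈ Refl, (L M).IsHomogeneous 1
  L_ker : ∀ M ∈ Refl, ∀ v : Fin n → ℝ, MvPolynomial.eval v (L M) = 0 ↔ M *ᵥ v = v

variable {n : ℕ}

namespace ReflSetup

/-- The fundamental antiinvariant `Δ = ∏_{α ∈ Φ⁺} L_α`. -/
noncomputable def Delta (P : ReflSetup n) : S n := ∏ M ∈ P.Refl, P.L M

/-- `f` is `W`-invariant. -/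
def IsInvariant (P : ReflSetup n) (f : S n) : Prop :=
  ∀ w ∈ P.W, mAct (w : Matrix (Fin n) (Fin n) ℝ) f = f

/-- The ideal `I = S·R₊` of `S` generated by the homogeneous invariants of positive
degree. -/
noncomputable def I (P : ReflSetup n) : Ideal (S n) :=
  Ideal.span {f : S n | P.IsInvariant f ∧ ∃ k, 0 < k ∧ f.IsHomogeneous k}

/-- The space `ℝ[∂]Δ = {f(∂)Δ : f ∈ S}`. -/
noncomputable def DeltaSpace (P : ReflSetup n) : Submodule ℝ (S n) :=
  Submodule.span ℝ {g : S n | ∃ f : S n, apDiff f P.Delta = g}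

end ReflSetup

/-- The diagonal action of a matrix on 1-forms `ω = Σⱼ ωⱼ dxⱼ`. -/
noncomputable def formAct (M : Matrix (Fin n) (Fin n) ℝ) (ω : Fin n → S n) : Fin n → S n :=
  fun k => ∑ j, M k j • mAct M (ω j)

namespace ReflSetup

/-- `Ω¹(V)^W = (S ⊗ V*)^W`, the `W`-invariant 1-forms. -/
noncomputable def Omega1W (P : ReflSetup n) : Submodule ℝ (Fin n → S n) :=
  Submodule.span ℝ
    {ω | ∀ w ∈ P.W, formAct (w : Matrix (Fin n) (Fin n) ℝ) ω = ω}

/-- `Ω_W = (ℝ[∂]Δ ⊗ V*)^W`. -/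
noncomputable def OmegaW (P : ReflSetup n) : Submodule ℝ (Fin n → S n) :=
  Submodule.span ℝ
    {ω | (∀ j, ω j ∈ P.DeltaSpace) ∧
      ∀ w ∈ P.W, formAct (w : Matrix (Fin n) (Fin n) ℝ) ω = ω}

end ReflSetup

/-- The differential `dh = Σⱼ (∂ⱼ h) dxⱼ`, a 1-form recorded by its coefficients. -/
noncomputable def dform (h : S n) : Fin n → S n := fun j => MvPolynomial.pderiv j h

/-- `ε(Σₖ hₖ dxₖ) = Σₖ xₖ hₖ`. -/
noncomputable def eps (ω : Fin n → S n) : S n := ∑ k, MvPolynomial.X k * ω k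

/-- The inner product on 1-forms: `(Σ gⱼ dxⱼ, Σ hⱼ dxⱼ) = Σⱼ ⟨gⱼ,hⱼ⟩`. -/
noncomputable def fip (ω₁ ω₂ : Fin n → S n) : ℝ := ∑ j, ip (ω₁ j) (ω₂ j)

namespace ReflSetup

/-- The map `φ(f) = ((f,Δ),Δ)`. -/
noncomputable def phi (P : ReflSetup n) (f : S n) : S n :=
  apDiff (apDiff f P.Delta) P.Delta

/-- The induced map `φ̃(Σ fⱼ dxⱼ) = Σ φ(fⱼ) dxⱼ` on 1-forms. -/
noncomputable def phit (P : ReflSetup n) (ω : Fin n → S n) : Fin n → S n :=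
  fun j => P.phi (ω j)

/-- A system of basic invariants: `n` algebraically independent homogeneous invariant
polynomials of positive degree generating the invariant algebra `R = S^W`. -/
def IsBasicSystem (P : ReflSetup n) (h : Fin n → S n) : Prop :=
  (∀ i, P.IsInvariant (h i)) ∧
  (∀ i, ∃ k, 0 < k ∧ (h i).IsHomogeneous k) ∧
  AlgebraicIndependent ℝ h ∧
  (Algebra.adjoin ℝ (Set.range h) : Set (S n)) = {f : S n | P.IsInvariant f}

/-- A canonical system of basic invariants: `(fᵢ,fⱼ) = δᵢⱼ`. -/
def IsCanonicalSystem (P : ReflSetup n) (f : Fin n → S n) : Prop :=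
  P.IsBasicSystem f ∧ ∀ i j, apDiff (f i) (f j) = if i = j then 1 else 0

/-- `W` acts irreducibly on `V = ℝⁿ`. -/
def IsIrred (P : ReflSetup n) : Prop :=
  ∀ U : Submodule ℝ (Fin n → ℝ),
    (∀ w ∈ P.W, ∀ v ∈ U, (w : Matrix (Fin n) (Fin n) ℝ) *ᵥ v ∈ U) → U = ⊥ ∨ U = ⊤

/-- `V` is spanned by the roots of `W` (the `(-1)`-eigenvectors of the reflections). -/
def SpannedByRoots (P : ReflSetup n) : Prop :=
  Submodule.span ℝ {v : Fin n → ℝ | ∃ M ∈ P.Refl, M *ᵥ v = -v} = ⊤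

/-- `U_{d,λ}`: homogeneous eigenvectors of `φ̃` in `Ω_W` of degree `d` and eigenvalue `λ`
(together with `0`). -/
def U (P : ReflSetup n) (d : ℕ) (lam : ℝ) : Set (Fin n → S n) :=
  {ω | ω ∈ P.OmegaW ∧ (∀ j, (ω j).IsHomogeneous d) ∧ P.phit ω = lam • ω}

end ReflSetup


section AuxLemmas

variable {m : ℕ}

private lemma eval0_monomial (a : Fin m →₀ ℕ) :
    MvPolynomial.eval (fun _ => (0:ℝ)) (MvPolynomial.monomial a (1:ℝ)) =
      if a = 0 then 1 else 0 := by
  rw [MvPolynomial.eval_monomial, one_mul]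
  split_ifs with h
  · subst h; simp
  · obtain ⟨i, hi⟩ := Finsupp.ne_iff.mp h
    simp only [Finsupp.coe_zero, Pi.zero_apply] at hi
    rw [Finsupp.prod]
    exact Finset.prod_eq_zero (Finsupp.mem_support_iff.mpr hi) (zero_pow hi)

private lemma ip_eq (u g : S m) :
    ip u g = ∑ a ∈ g.support, coeff a u * coeff a g * ∏ i, ((a i).factorial : ℝ) := by
  unfold ip apDiff
  rw [map_sum]
  have : ∀ a ∈ u.support,
      MvPolynomial.eval (fun _ => (0:ℝ)) (∑ b ∈ g.support,
        if a ≤ b then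
          (MvPolynomial.coeff a u * MvPolynomial.coeff b g *
            ∏ i, ((b i).descFactorial (a i) : ℝ)) • MvPolynomial.monomial (b - a) (1 : ℝ)
        else 0) =
      ∑ b ∈ g.support,
        if b = a then coeff a u * coeff a g * ∏ i, ((a i).factorial : ℝ) else 0 := by
    intro a _
    rw [map_sum]
    refine Finset.sum_congr rfl fun b _ => ?_
    rw [apply_ite (MvPolynomial.eval fun _ => (0:ℝ)), map_zero]
    by_cases hab : a ≤ b
    · rw [if_pos hab, MvPolynomial.smul_eq_C_mul, _root_.map_mul, MvPolynomial.eval_C,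
        eval0_monomial]
      by_cases hba : b = a
      · subst hba
        rw [if_pos (by simp), if_pos rfl]
        simp [Nat.descFactorial_self]
      · rw [if_neg (fun h => hba (le_antisymm (tsub_eq_zero_iff_le.mp h) hab)),
          if_neg hba, mul_zero]
    · rw [if_neg hab, if_neg (fun h => hab h.ge)]
  rw [Finset.sum_congr rfl this, Finset.sum_comm]
  refine Finset.sum_congr rfl fun b hb => ?_
  rw [Finset.sum_ite_eq u.support b
    (fun a => coeff a u * coeff a g * ∏ i, ((a i).factorial : ℝ))]
  by_cases hbu : b ∈ u.support
  · rw [if_pos hbu]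
  · rw [if_neg hbu, MvPolynomial.notMem_support_iff.mp hbu, zero_mul, zero_mul]

private lemma coeff_apDiff (f h : S m) (a : Fin m →₀ ℕ) :
    coeff a (apDiff f h) =
      ∑ p ∈ f.support, coeff p f * coeff (p + a) h *
        ∏ i, (((p + a) i).descFactorial (p i) : ℝ) := by
  unfold apDiff
  rw [MvPolynomial.coeff_sum]
  refine Finset.sum_congr rfl fun p _ => ?_
  rw [MvPolynomial.coeff_sum]
  have : ∀ q ∈ h.support,
      coeff a (if p ≤ q then
        (MvPolynomial.coeff p f * MvPolynomial.coeff q h *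
          ∏ i, ((q i).descFactorial (p i) : ℝ)) • MvPolynomial.monomial (q - p) (1 : ℝ)
        else 0) =
      if q = p + a then
        coeff p f * coeff (p + a) h * ∏ i, (((p + a) i).descFactorial (p i) : ℝ)
      else 0 := by
    intro q _
    rw [apply_ite (coeff a), MvPolynomial.coeff_zero]
    by_cases hpq : p ≤ q
    · rw [if_pos hpq, MvPolynomial.coeff_smul, MvPolynomial.coeff_monomial]
      by_cases hq : q = p + a
      · subst hq
        rw [if_pos (add_tsub_cancel_left p a), if_pos rfl]
        simp
      · rw [if_neg (fun hh => hq (by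
            have := (tsub_eq_iff_eq_add_of_le hpq).mp hh
            rw [this, add_comm])), if_neg hq, smul_zero]
    · rw [if_neg hpq, if_neg (fun hq => hpq (by rw [hq]; exact le_self_add))]
  rw [Finset.sum_congr rfl this,
    Finset.sum_ite_eq' h.support (p + a)
      (fun _ => coeff p f * coeff (p + a) h * ∏ i, (((p + a) i).descFactorial (p i) : ℝ))]
  by_cases hq : p + a ∈ h.support
  · rw [if_pos hq]
  · rw [if_neg hq, MvPolynomial.notMem_support_iff.mp hq, mul_zero, zero_mul]

private lemma ip_apDiff (f h g : S m) :
    ip (apDiff f h) g =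
      ∑ a ∈ g.support, ∑ p ∈ f.support,
        coeff p f * coeff a g * coeff (p + a) h * ∏ i, (((p + a) i).factorial : ℝ) := by
  rw [ip_eq]
  refine Finset.sum_congr rfl fun a _ => ?_
  rw [coeff_apDiff, Finset.sum_mul, Finset.sum_mul]
  refine Finset.sum_congr rfl fun p _ => ?_
  have : (∏ i, (((p + a) i).descFactorial (p i) : ℝ)) * ∏ i, ((a i).factorial : ℝ) =
      ∏ i, (((p + a) i).factorial : ℝ) := by
    rw [← Finset.prod_mul_distrib]
    refine Finset.prod_congr rfl fun i _ => ?_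
    rw [← Nat.cast_mul, mul_comm]
    congr 1
    have : (p + a) i - p i = a i := by simp
    calc (a i).factorial * ((p + a) i).descFactorial (p i)
        = ((p + a) i - p i).factorial * ((p + a) i).descFactorial (p i) := by rw [this]
      _ = ((p + a) i).factorial := Nat.factorial_mul_descFactorial (by simp)
  rw [← this]; ring

private lemma ip_apDiff_symm (f g h : S m) :
    ip (apDiff f h) g = ip (apDiff g h) f := by
  rw [ip_apDiff, ip_apDiff, Finset.sum_comm]
  refine Finset.sum_congr rfl fun a _ => Finset.sum_congr rfl fun p _ => ?_
  rw [add_comm p a]; ring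

private lemma ip_symm (u g : S m) : ip u g = ip g u := by
  rw [ip_eq, ip_eq]
  have h1 : (∑ a ∈ g.support, coeff a u * coeff a g * ∏ i, ((a i).factorial : ℝ)) =
      ∑ a ∈ u.support ∪ g.support, coeff a u * coeff a g * ∏ i, ((a i).factorial : ℝ) :=
    Finset.sum_subset Finset.subset_union_right
      (fun x _ hx => by rw [MvPolynomial.notMem_support_iff.mp hx, mul_zero, zero_mul])
  have h2 : (∑ a ∈ u.support, coeff a g * coeff a u * ∏ i, ((a i).factorial : ℝ)) =
      ∑ a ∈ u.support ∪ g.support, coeff a g * coeff a u * ∏ i, ((a i).factorial : ℝ) :=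
    Finset.sum_subset Finset.subset_union_left
      (fun x _ hx => by rw [MvPolynomial.notMem_support_iff.mp hx, mul_zero, zero_mul])
  rw [h1, h2]
  exact Finset.sum_congr rfl fun a _ => by ring

end AuxLemmas

theorem stmt10 (P : ReflSetup n) (f g : S n) :
    ip (P.phi f) g = ip f (P.phi g) := by
  unfold ReflSetup.phi
  rw [ip_apDiff_symm, ip_symm, ip_apDiff_symm, ip_symm]
end
end

section
/- Let W be the irreducible finite reflection group of type D_n with n = 2ℓ even (ℓ ≥ 2), acting on ℝ^n by permutations and even sign changes of coordinates, so that Δ = ∏_{1 ≤ i < j ≤ n} (x_i² − x_j²). Then for f = x_1 x_2 ⋯ x_n, the 1-form df is an eigenvector of φ̃ : Ω_W → Ω_W, i.e., there exists λ ∈ ℝ with φ(∂_j f) = λ ∂_j f for every j = 1,…,n. -/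
open MvPolynomial
open scoped Classical

noncomputable section

variable {n : ℕ}

/-!
`φ` commutes with signed permutations of the variables: the pairing `apDiff` commutes with them
(it suffices to check this on monomials), sign changes fix `Δ`, and a permutation multiplies `Δ`
by its sign, which enters `φ` squared. Hence for a squarefree monomial `x^a`, `φ(x^a)` is
homogeneous of degree at most `|a|` and has the parity of `x^a` in every variable; the only
monomial with both properties is `x^a` itself, so `x^a` is an eigenvector of `φ`. The derivatives
`∂ⱼ(x₁⋯xₙ)` are squarefree monomials, and the transposition of `j` and `j'` carries one to the
other, so they share one eigenvalue.
-/

-- `apDiffMon a b = ∂^a (x^b)`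
def apDiffMon (a b : Fin n →₀ ℕ) : S n :=
  if a ≤ b then monomial (b - a) (∏ i, ((b i).descFactorial (a i) : ℝ)) else 0

lemma apDiff_eq_sum_support (f g : S n) :
    apDiff f g =
      ∑ a ∈ f.support, ∑ b ∈ g.support, (coeff a f * coeff b g) • apDiffMon a b := by
  refine Finset.sum_congr rfl fun a _ => Finset.sum_congr rfl fun b _ => ?_
  unfold apDiffMon
  split_ifs <;> simp [smul_monomial]

lemma apDiff_eq_sum {f g : S n} {A B : Finset (Fin n →₀ ℕ)}
    (hA : f.support ⊆ A) (hB : g.support ⊆ B) :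
    apDiff f g = ∑ a ∈ A, ∑ b ∈ B, (coeff a f * coeff b g) • apDiffMon a b := by
  rw [apDiff_eq_sum_support]
  refine Finset.sum_subset hA (fun a _ ha => ?_) |>.trans
    (Finset.sum_congr rfl fun a _ => Finset.sum_subset hB fun b _ hb => ?_)
  · simp [notMem_support_iff.mp ha]
  · simp [notMem_support_iff.mp hb]

lemma apDiff_monomial (a b : Fin n →₀ ℕ) (c d : ℝ) :
    apDiff (monomial a c) (monomial b d) = (c * d) • apDiffMon a b := by
  rw [apDiff_eq_sum (A := {a}) (B := {b}) support_monomial_subset support_monomial_subset]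
  simp

lemma apDiff_add_left (f f' g : S n) : apDiff (f + f') g = apDiff f g + apDiff f' g := by
  rw [apDiff_eq_sum support_add subset_rfl,
    apDiff_eq_sum (Finset.subset_union_left (s₂ := f'.support)) subset_rfl,
    apDiff_eq_sum (Finset.subset_union_right (s₁ := f.support)) subset_rfl]
  simp only [coeff_add, add_mul, add_smul, Finset.sum_add_distrib]

lemma apDiff_add_right (f g g' : S n) : apDiff f (g + g') = apDiff f g + apDiff f g' := by
  rw [apDiff_eq_sum subset_rfl support_add,
    apDiff_eq_sum subset_rfl (Finset.subset_union_left (s₂ := g'.support)),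
    apDiff_eq_sum subset_rfl (Finset.subset_union_right (s₁ := g.support))]
  simp only [coeff_add, mul_add, add_smul, Finset.sum_add_distrib]

lemma apDiff_smul_left (c : ℝ) (f g : S n) : apDiff (c • f) g = c • apDiff f g := by
  rw [apDiff_eq_sum support_smul subset_rfl, apDiff_eq_sum subset_rfl subset_rfl]
  simp only [coeff_smul, smul_eq_mul, mul_assoc, mul_smul, Finset.smul_sum]

lemma apDiff_smul_right (c : ℝ) (f g : S n) : apDiff f (c • g) = c • apDiff f g := by
  rw [apDiff_eq_sum subset_rfl support_smul, apDiff_eq_sum subset_rfl subset_rfl]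
  simp only [coeff_smul, smul_eq_mul, mul_left_comm _ c, mul_smul, Finset.smul_sum]

lemma degree_tsub_of_le {a b : Fin n →₀ ℕ} (h : a ≤ b) :
    (b - a).degree = b.degree - a.degree := by
  rw [← tsub_add_cancel_of_le h, map_add, add_tsub_cancel_right, add_tsub_cancel_right]

lemma apDiffMon_isHomogeneous (a b : Fin n →₀ ℕ) :
    (apDiffMon a b).IsHomogeneous (b.degree - a.degree) := by
  unfold apDiffMon
  split_ifs with h
  · exact isHomogeneous_monomial _ (degree_tsub_of_le h)
  · exact isHomogeneous_zero _ _ _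

lemma apDiff_isHomogeneous {f g : S n} {d e : ℕ} (hf : f.IsHomogeneous d)
    (hg : g.IsHomogeneous e) : (apDiff f g).IsHomogeneous (e - d) := by
  rw [apDiff_eq_sum_support, ← mem_homogeneousSubmodule]
  refine Submodule.sum_mem _ fun a ha => Submodule.sum_mem _ fun b hb =>
    Submodule.smul_mem _ _ ?_
  have hfa := hf (mem_support_iff.mp ha)
  have hgb := hg (mem_support_iff.mp hb)
  rw [Pi.one_def, ← Finsupp.degree_eq_weight_one] at hfa hgb
  rw [mem_homogeneousSubmodule, ← hfa, ← hgb]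
  exact apDiffMon_isHomogeneous a b

lemma apDiff_map_of_monomial {T : S n →ₐ[ℝ] S n}
    (hT : ∀ a b, apDiff (T (monomial a 1)) (T (monomial b 1)) =
      T (apDiff (monomial a 1) (monomial b 1)))
    (f g : S n) : apDiff (T f) (T g) = T (apDiff f g) := by
  have hmon : ∀ (a : Fin n →₀ ℕ) (c : ℝ), monomial a c = c • monomial a (1 : ℝ) := fun a c => by
    rw [smul_monomial, smul_eq_mul, mul_one]
  induction f using induction_on' with
  | monomial a c =>
    induction g using induction_on' with
    | monomial b d =>
      rw [hmon a c, hmon b d]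
      simp only [map_smul, apDiff_smul_left, apDiff_smul_right, hT]
    | add g g' hg hg' => simp only [map_add, apDiff_add_right, hg, hg']
  | add f f' hf hf' => simp only [map_add, apDiff_add_left, hf, hf']

def scaleVars (s : Fin n → ℝ) : S n →ₐ[ℝ] S n := aeval fun k => s k • X k

lemma scaleVars_monomial (s : Fin n → ℝ) (b : Fin n →₀ ℕ) (c : ℝ) :
    scaleVars s (monomial b c) = (∏ k, s k ^ b k) • monomial b c := by
  rw [scaleVars, aeval_monomial, monomial_eq, Finsupp.prod_fintype _ _ (fun _ => pow_zero _),
    Finsupp.prod_fintype _ _ (fun _ => pow_zero _)]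
  simp only [smul_pow, Finset.prod_smul, algebraMap_eq, mul_smul_comm]

lemma coeff_scaleVars (s : Fin n → ℝ) (p : S n) (b : Fin n →₀ ℕ) :
    coeff b (scaleVars s p) = (∏ k, s k ^ b k) * coeff b p := by
  induction p using induction_on' with
  | monomial a c =>
    rw [scaleVars_monomial, coeff_smul, coeff_monomial, smul_eq_mul]
    split_ifs with h
    · rw [h]
    · rw [mul_zero, mul_zero]
  | add p q hp hq => rw [map_add, coeff_add, coeff_add, hp, hq, mul_add]

lemma prod_pow_mul_prod_pow_of_sq_eq_one {s : Fin n → ℝ} (hs : ∀ k, s k ^ 2 = 1)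
    {a b : Fin n →₀ ℕ} (h : a ≤ b) :
    (∏ k, s k ^ a k) * ∏ k, s k ^ b k = ∏ k, s k ^ (b - a) k := by
  rw [← Finset.prod_mul_distrib]
  refine Finset.prod_congr rfl fun k _ => ?_
  obtain ⟨c, hc⟩ := Nat.exists_eq_add_of_le (h k)
  rw [Finsupp.tsub_apply, hc, Nat.add_sub_cancel_left, ← pow_add, ← add_assoc, ← two_mul,
    pow_add, pow_mul, hs, one_pow, one_mul]

lemma scaleVars_apDiffMon {s : Fin n → ℝ} (hs : ∀ k, s k ^ 2 = 1) (a b : Fin n →₀ ℕ) :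
    scaleVars s (apDiffMon a b) = ((∏ k, s k ^ a k) * ∏ k, s k ^ b k) • apDiffMon a b := by
  unfold apDiffMon
  split_ifs with h
  · rw [scaleVars_monomial, prod_pow_mul_prod_pow_of_sq_eq_one hs h]
  · rw [map_zero, smul_zero]

lemma apDiff_scaleVars {s : Fin n → ℝ} (hs : ∀ k, s k ^ 2 = 1) (f g : S n) :
    apDiff (scaleVars s f) (scaleVars s g) = scaleVars s (apDiff f g) :=
  apDiff_map_of_monomial (fun a b => by
    simp only [scaleVars_monomial, apDiff_smul_left, apDiff_smul_right, apDiff_monomial, map_smul,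
      scaleVars_apDiffMon hs, smul_smul]
    ring_nf) f g

def flipSign (i : Fin n) : Fin n → ℝ := Function.update 1 i (-1)

lemma flipSign_sq (i k : Fin n) : flipSign i k ^ 2 = 1 := by
  unfold flipSign
  rcases eq_or_ne k i with rfl | h
  · simp
  · simp [Function.update_of_ne h]

lemma prod_flipSign_pow (i : Fin n) (b : Fin n →₀ ℕ) :
    ∏ k, flipSign i k ^ b k = (-1) ^ b i := by
  rw [Fintype.prod_eq_single i fun k hk => by simp [flipSign, Function.update_of_ne hk]]
  simp [flipSign]

lemma rename_apDiffMon (τ : Equiv.Perm (Fin n)) (a b : Fin n →₀ ℕ) :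
    rename τ (apDiffMon a b) = apDiffMon (a.mapDomain τ) (b.mapDomain τ) := by
  unfold apDiffMon
  simp only [Finsupp.mapDomain_le_mapDomain_iff_le τ.injective]
  split_ifs
  · rw [rename_monomial, Finsupp.mapDomain_tsub τ.injective]
    congr 1
    refine Fintype.prod_equiv τ _ _ fun i => ?_
    rw [Finsupp.mapDomain_apply τ.injective, Finsupp.mapDomain_apply τ.injective]
  · rw [map_zero]

lemma apDiff_rename (τ : Equiv.Perm (Fin n)) (f g : S n) :
    apDiff (rename τ f) (rename τ g) = rename τ (apDiff f g) :=
  apDiff_map_of_monomial (fun a b => by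
    simp only [rename_monomial, apDiff_monomial, map_smul, rename_apDiffMon]) f g

variable (n) in
def deltaD : S n := ∏ i : Fin n, ∏ k ∈ Finset.Ioi i, ((X i : S n) ^ 2 - X k ^ 2)

lemma deltaD_isHomogeneous : (deltaD n).IsHomogeneous (∑ i : Fin n, ∑ _k ∈ Finset.Ioi i, 2) :=
  IsHomogeneous.prod _ _ _ fun i _ => IsHomogeneous.prod _ _ _ fun k _ =>
    ((isHomogeneous_X ℝ i).pow 2).sub ((isHomogeneous_X ℝ k).pow 2)

lemma scaleVars_deltaD {s : Fin n → ℝ} (hs : ∀ k, s k ^ 2 = 1) :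
    scaleVars s (deltaD n) = deltaD n := by
  simp only [deltaD, map_prod, map_sub, map_pow, scaleVars, aeval_X, smul_pow, hs, one_smul]

lemma deltaD_eq_mul_det_vandermonde :
    deltaD n = (∏ i : Fin n, (-1) ^ (Finset.Ioi i).card) *
      (Matrix.vandermonde fun i => (X i : S n) ^ 2).det := by
  rw [Matrix.det_vandermonde, ← Finset.prod_mul_distrib, deltaD]
  refine Finset.prod_congr rfl fun i _ => ?_
  rw [← Finset.prod_neg]
  simp only [neg_sub]

lemma rename_deltaD (τ : Equiv.Perm (Fin n)) :
    rename τ (deltaD n) = ((Equiv.Perm.sign τ : ℤ) : ℝ) • deltaD n := by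
  have hV : (rename τ).mapMatrix (Matrix.vandermonde fun i => (X i : S n) ^ 2) =
      (Matrix.vandermonde fun i => (X i : S n) ^ 2).submatrix τ id := by
    ext i j
    simp [Matrix.vandermonde_apply]
  rw [deltaD_eq_mul_det_vandermonde, map_mul, AlgHom.map_det, hV, Matrix.det_permute,
    Int.cast_smul_eq_zsmul, zsmul_eq_mul]
  simp only [map_prod, map_pow, map_neg, map_one]
  ring

def phi (p : S n) : S n := apDiff (apDiff p (deltaD n)) (deltaD n)

lemma phi_smul (c : ℝ) (p : S n) : phi (c • p) = c • phi p := by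
  simp only [phi, apDiff_smul_left]

lemma phi_isHomogeneous {p : S n} {d : ℕ} (hp : p.IsHomogeneous d) :
    ∃ k ≤ d, (phi p).IsHomogeneous k :=
  ⟨_, tsub_tsub_le, apDiff_isHomogeneous (apDiff_isHomogeneous hp deltaD_isHomogeneous)
    deltaD_isHomogeneous⟩

lemma scaleVars_phi {s : Fin n → ℝ} (hs : ∀ k, s k ^ 2 = 1) (p : S n) :
    scaleVars s (phi p) = phi (scaleVars s p) := by
  simp only [phi, ← apDiff_scaleVars hs, scaleVars_deltaD hs]

lemma rename_phi (τ : Equiv.Perm (Fin n)) (p : S n) :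
    rename τ (phi p) = phi (rename τ p) := by
  simp only [phi, ← apDiff_rename, rename_deltaD, apDiff_smul_left, apDiff_smul_right, smul_smul,
    ← Int.cast_mul, Int.units_coe_mul_self, Int.cast_one, one_smul]

lemma eq_of_le_of_degree_le {a b : Fin n →₀ ℕ} (hab : a ≤ b) (h : b.degree ≤ a.degree) :
    a = b := by
  refine le_antisymm hab (tsub_eq_zero_iff_le.mp ?_)
  rw [← Finsupp.degree_eq_zero_iff, degree_tsub_of_le hab]
  exact tsub_eq_zero_of_le h

lemma eq_coeff_smul_monomial {p : S n} {a : Fin n →₀ ℕ} {k : ℕ} (ha : ∀ i, a i ≤ 1)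
    (hp : p.IsHomogeneous k) (hk : k ≤ a.degree)
    (hneg : ∀ i, scaleVars (flipSign i) p = (-1 : ℝ) ^ a i • p) :
    p = coeff a p • monomial a 1 := by
  ext b
  rw [coeff_smul, coeff_monomial, smul_eq_mul, mul_ite, mul_one, mul_zero]
  split_ifs with hab
  · rw [hab]
  by_contra hb
  have hle : a ≤ b := fun i => by
    have hsign := congrArg (coeff b) (hneg i)
    rw [coeff_scaleVars, prod_flipSign_pow, coeff_smul, smul_eq_mul] at hsign
    have hpow := mul_right_cancel₀ hb hsign
    by_contra! hlt
    obtain ⟨hb0, ha1⟩ : b i = 0 ∧ a i = 1 := by have := ha i; omega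
    norm_num [hb0, ha1] at hpow
  have hdeg : b.degree ≤ a.degree := by
    have hbk := hp hb
    rw [Pi.one_def, ← Finsupp.degree_eq_weight_one] at hbk
    exact hbk ▸ hk
  exact hab (eq_of_le_of_degree_le hle hdeg)

lemma phi_monomial_eq_smul {a : Fin n →₀ ℕ} (ha : ∀ i, a i ≤ 1) :
    phi (monomial a 1) = coeff a (phi (monomial a 1)) • monomial a 1 := by
  obtain ⟨k, hk, hphi⟩ := phi_isHomogeneous (isHomogeneous_monomial (1 : ℝ) (d := a) rfl)
  refine eq_coeff_smul_monomial ha hphi hk fun i => ?_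
  rw [scaleVars_phi (flipSign_sq i), scaleVars_monomial, prod_flipSign_pow, phi_smul]

lemma exists_monomial_eq_pderiv_prod_X (j : Fin n) :
    ∃ a : Fin n →₀ ℕ, (∀ i, a i ≤ 1) ∧ pderiv j (∏ i, X i : S n) = monomial a 1 := by
  refine ⟨(∑ i, Finsupp.single i 1) - Finsupp.single j 1, fun i => ?_, ?_⟩
  · simp [Finsupp.single_apply]
  · change pderiv j (∏ i, monomial (Finsupp.single i 1) (1 : ℝ)) = _
    rw [← monomial_sum_one, pderiv_monomial]
    simp [Finsupp.single_apply]

lemma rename_pderiv_prod_X (τ : Equiv.Perm (Fin n)) (j : Fin n) :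
    rename τ (pderiv j (∏ i, X i : S n)) = pderiv (τ j) (∏ i, X i : S n) := by
  rw [← pderiv_rename τ.injective, map_prod]
  simp only [rename_X]
  rw [Fintype.prod_equiv τ (fun i => (X (τ i) : S n)) X fun _ => rfl]

theorem exists_phi_pderiv_prod_X_eq_smul :
    ∃ lam : ℝ, ∀ j : Fin n,
      phi (pderiv j (∏ i, X i : S n)) = lam • pderiv j (∏ i, X i : S n) := by
  have heig : ∀ j : Fin n, ∃ c : ℝ, phi (pderiv j (∏ i, X i : S n)) =
      c • pderiv j (∏ i, X i : S n) ∧ pderiv j (∏ i, X i : S n) ≠ 0 := fun j => by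
    obtain ⟨a, ha, hm⟩ := exists_monomial_eq_pderiv_prod_X j
    rw [hm]
    exact ⟨_, phi_monomial_eq_smul ha, monomial_eq_zero.not.mpr one_ne_zero⟩
  choose c hc hne using heig
  have hconst : ∀ j j', c j = c j' := fun j j' => smul_left_injective ℝ (hne j') <| by
    dsimp only
    rw [← hc j', ← Equiv.swap_apply_left j j', ← rename_pderiv_prod_X, ← rename_phi, hc j,
      map_smul]
  rcases isEmpty_or_nonempty (Fin n) with h | ⟨⟨j₀⟩⟩
  · exact ⟨0, fun j => isEmptyElim j⟩
  · exact ⟨c j₀, fun j => by rw [hc j, hconst j j₀]⟩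

theorem stmt19_general (ℓ : ℕ) :
    ∃ lam : ℝ, ∀ j : Fin (2 * ℓ),
      apDiff (apDiff (MvPolynomial.pderiv j (∏ i, (MvPolynomial.X i : S (2 * ℓ))))
          (∏ i : Fin (2 * ℓ), ∏ k ∈ Finset.Ioi i,
            ((MvPolynomial.X i : S (2 * ℓ)) ^ 2 - MvPolynomial.X k ^ 2)))
        (∏ i : Fin (2 * ℓ), ∏ k ∈ Finset.Ioi i,
            ((MvPolynomial.X i : S (2 * ℓ)) ^ 2 - MvPolynomial.X k ^ 2))
      = lam • MvPolynomial.pderiv j (∏ i, (MvPolynomial.X i : S (2 * ℓ))) :=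
  exists_phi_pderiv_prod_X_eq_smul

theorem stmt19 (ℓ : ℕ) (hl : 2 ≤ ℓ) :
    ∃ lam : ℝ, ∀ j : Fin (2 * ℓ),
      apDiff (apDiff (MvPolynomial.pderiv j (∏ i, (MvPolynomial.X i : S (2 * ℓ))))
          (∏ i : Fin (2 * ℓ), ∏ k ∈ Finset.Ioi i,
            ((MvPolynomial.X i : S (2 * ℓ)) ^ 2 - MvPolynomial.X k ^ 2)))
        (∏ i : Fin (2 * ℓ), ∏ k ∈ Finset.Ioi i,
            ((MvPolynomial.X i : S (2 * ℓ)) ^ 2 - MvPolynomial.X k ^ 2))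
      = lam • MvPolynomial.pderiv j (∏ i, (MvPolynomial.X i : S (2 * ℓ))) :=
  stmt19_general ℓ
end
end
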